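/- Let V_0 be a finite set of constraint applications with constants over the two variables x, y in which the only constant occurring is 0, in which every constraint used is complementive, and such that an assignment satisfies V_0 if and only if it satisfies x → y. Let V_f be obtained from V_0 by replacing every occurrence of the constant 0 by a fresh variable f. Then an assignment (f, x, y) ∈ {0,1}^3 satisfies V_f if and only if it satisfies (¬f ∧ (x → y)) ∨ (f ∧ (y → x)). -/

import Mathlib

/-!
Since `0` is the only constant, setting `f = 0` turns `V_f` back into `V_0`. Setting `f = 1`
and complementing every argument leaves each complementive constraint unchanged, so `V_f` at
`(1, x, y)` holds iff `V_0` holds at `(¬x, ¬y)`, i.e. iff `¬x → ¬y`.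
-/

/-- A constraint application with constants over a variable set `X`: a `k`-ary
Boolean constraint `C` whose arguments are variables (`Sum.inl`) or Boolean
constants (`Sum.inr`). -/
structure CAppC (X : Type) where
  k : ℕ
  C : (Fin k → Bool) → Bool
  args : Fin k → X ⊕ Bool

/-- An assignment `I` satisfies a constraint application with constants. -/
def CAppC.sat {X : Type} (A : CAppC X) (I : X → Bool) : Prop :=
  A.C (fun i => Sum.elim I id (A.args i)) = true

/-- A constraint application (without constants). -/
structure CApp (X : Type) where
  k : ℕ
  C : (Fin k → Bool) → Bool
  vars : Fin k → X

/-- An assignment `I` satisfies a constraint application. -/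
def CApp.sat {X : Type} (A : CApp X) (I : X → Bool) : Prop :=
  A.C (fun i => I (A.vars i)) = true

/-- Replace every constant occurring in `A` by the fresh variable
`Sum.inr ()`. -/
def CAppC.toF {X : Type} (A : CAppC X) : CApp (X ⊕ Unit) :=
  ⟨A.k, A.C, fun i => Sum.elim Sum.inl (fun _ => Sum.inr ()) (A.args i)⟩

def Complementive {k : ℕ} (C : (Fin k → Bool) → Bool) : Prop :=
  ∀ s, C s = C (fun i => !(s i))

theorem CApp.sat_not_iff {X : Type} (B : CApp X) (hB : Complementive B.C) (J : X → Bool) :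
    B.sat (fun v => !(J v)) ↔ B.sat J := by
  rw [CApp.sat, CApp.sat, hB (fun i => J (B.vars i))]

namespace CAppC

variable {X : Type} (A : CAppC X)

theorem toF_sat_elim_false (hA : ∀ i, A.args i ≠ Sum.inr true) (I : X → Bool) :
    A.toF.sat (Sum.elim I fun _ => false) ↔ A.sat I := by
  suffices h : (fun i => Sum.elim I (fun _ => false) (A.toF.vars i)) =
      fun i => Sum.elim I id (A.args i) by
    exact iff_of_eq (congrArg (A.C · = true) h)
  funext i
  specialize hA i
  rcases h : A.args i with v | (_ | _)
  · simp [toF, h]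
  · simp [toF, h]
  · exact absurd h hA

theorem toF_sat_elim_true (hA : ∀ i, A.args i ≠ Sum.inr true) (hC : Complementive A.C)
    (I : X → Bool) :
    A.toF.sat (Sum.elim I fun _ => true) ↔ A.sat (fun v => !(I v)) := by
  have hnot : (Sum.elim (fun v => !(I v)) fun _ : Unit => false) =
      fun w => !(Sum.elim I (fun _ => true) w) := by
    funext w
    cases w <;> rfl
  rw [← toF_sat_elim_false A hA, hnot]
  exact (A.toF.sat_not_iff hC _).symm

end CAppC

/-- Let `V_0` be a finite set of constraint applications with constants over
the variables `x = 0`, `y = 1` whose only occurring constant is `0`, whose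
constraints are all complementive, and which is equivalent to `x → y`. Let
`V_f` replace every constant `0` by a fresh variable `f`. Then `(f, x, y)`
satisfies `V_f` iff it satisfies `(¬f ∧ (x → y)) ∨ (f ∧ (y → x))`. -/
theorem stmt_9 (V0 : Finset (CAppC (Fin 2)))
    (hconst : ∀ A ∈ V0, ∀ i : Fin A.k, A.args i ≠ Sum.inr true)
    (hcompl : ∀ A ∈ V0, ∀ s : Fin A.k → Bool, A.C s = A.C (fun i => !(s i)))
    (hequiv : ∀ I : Fin 2 → Bool, (∀ A ∈ V0, A.sat I) ↔ (!(I 0) || I 1) = true) :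
    ∀ f x y : Bool,
      (∀ A ∈ V0, (CAppC.toF A).sat (Sum.elim ![x, y] fun _ => f)) ↔
        ((!f && (!x || y)) || (f && (!y || x))) = true := by
  intro f x y
  cases f
  · rw [forall₂_congr fun A hA => A.toF_sat_elim_false (hconst A hA) _, hequiv]
    cases x <;> cases y <;> rfl
  · rw [forall₂_congr fun A hA => A.toF_sat_elim_true (hconst A hA) (hcompl A hA) _, hequiv]
    cases x <;> cases y <;> rfl
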